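/- Let the unit-demand buyers have generic values and let p be a minimal Walrasian equilibrium price vector (so some allocation μ makes (p,μ) a Walrasian equilibrium). Then the over-demand of every good is at most 1: for every good g, OD(g;p) ≤ 1, i.e., at most s_g + 1 buyers have g in their demand correspondence at p. -/
import Mathlib


open Finset

noncomputable section

/-- Utility of an option for a unit-demand buyer: `none` means buying nothing. -/
def utilU {m : ℕ} (v p : Fin m → ℝ) : Option (Fin m) → ℝ
  | none => 0
  | some g => v g - p g

/-- Value of an option (the value of the good, or `0` for the empty option). -/
def vOpt {n m : ℕ} (v : Fin n → Fin m → ℝ) (q : Fin n) : Option (Fin m) → ℝ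
  | none => 0
  | some g => v q g

/-- Demand correspondence: the utility-maximizing options at prices `p`. -/
def DemU {m : ℕ} (v p : Fin m → ℝ) : Set (Option (Fin m)) :=
  {o | ∀ o', utilU v p o' ≤ utilU v p o}

/-- Walrasian equilibrium for unit-demand buyers with supplies `s`. -/
def IsWEU {n m : ℕ} (s : Fin m → ℕ) (v : Fin n → Fin m → ℝ)
    (p : Fin m → ℝ) (μ : Fin n → Option (Fin m)) : Prop :=
  (∀ g, (univ.filter fun q => μ q = some g).card ≤ s g) ∧
  (∀ q, μ q ∈ DemU (v q) p) ∧
  (∀ g, (univ.filter fun q => μ q = some g).card < s g → p g = 0)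

/-- `p` is a minimal Walrasian equilibrium price vector. -/
def IsMinimalWEPriceU {n m : ℕ} (s : Fin m → ℕ) (v : Fin n → Fin m → ℝ)
    (p : Fin m → ℝ) : Prop :=
  (∀ g, 0 ≤ p g) ∧ (∃ μ, IsWEU s v p μ) ∧
  ∀ p' : Fin m → ℝ, (∀ g, 0 ≤ p' g) → (∃ μ, IsWEU s v p' μ) → ∀ g, p g ≤ p' g

/-- Genericity: the values are linearly independent over `{-1,0,1}`. -/
def GenericU {n m : ℕ} (v : Fin n → Fin m → ℝ) : Prop :=
  ∀ α : Fin n → Fin m → ℤ,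
    (∀ q g, α q g = -1 ∨ α q g = 0 ∨ α q g = 1) →
    (∑ q, ∑ g, (α q g : ℝ) * v q g) = 0 →
    ∀ q g, α q g = 0

/-- Edge of the swap graph: a directed edge from node `a` to node `b` (nodes are
`some`-goods or the null node `none`), witnessed by a buyer allocated `a` who also
demands the good `b`.  There are no edges into the null node. -/
def SwapEdgeU {n m : ℕ} (v : Fin n → Fin m → ℝ) (p : Fin m → ℝ)
    (μ : Fin n → Option (Fin m)) (a b : Option (Fin m)) : Prop :=
  ∃ (q : Fin n) (g : Fin m), b = some g ∧ μ q = a ∧ b ∈ DemU (v q) p ∧ a ≠ b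


section Aux

attribute [local instance] Classical.propDecidable

variable {n m : ℕ}

/-- Price of an option. -/
def pO (p : Fin m → ℝ) : Option (Fin m) → ℝ := fun o => o.elim 0 p

/-- Value of an option. -/
def vO (v : Fin m → ℝ) : Option (Fin m) → ℝ := fun o => o.elim 0 v

lemma utilU_eq (v p : Fin m → ℝ) (o : Option (Fin m)) :
    utilU v p o = vO v o - pO p o := by cases o <;> simp [utilU, vO, pO]

lemma util_eq_of_mem {v p : Fin m → ℝ} {o o' : Option (Fin m)}
    (h : o ∈ DemU v p) (h' : o' ∈ DemU v p) : utilU v p o = utilU v p o' :=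
  le_antisymm (h' o) (h o')

/-- A chain of swap edges, recorded as a list of (buyer, target good) pairs. -/
def SChain (v : Fin n → Fin m → ℝ) (p : Fin m → ℝ) (μ : Fin n → Option (Fin m)) :
    Option (Fin m) → Option (Fin m) → List (Fin n × Fin m) → Prop
  | a, b, [] => a = b
  | a, b, e :: E => μ e.1 = a ∧ some e.2 ∈ DemU (v e.1) p ∧ a ≠ some e.2 ∧
      SChain v p μ (some e.2) b E

lemma chain_of_rtg {v : Fin n → Fin m → ℝ} {p : Fin m → ℝ} {μ : Fin n → Option (Fin m)}
    {a b : Option (Fin m)} (h : Relation.ReflTransGen (SwapEdgeU v p μ) a b) :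
    ∃ E, SChain v p μ a b E := by
  induction h using Relation.ReflTransGen.head_induction_on with
  | refl => exact ⟨[], rfl⟩
  | head he _ ih =>
    obtain ⟨E, hE⟩ := ih
    obtain ⟨q, g, rfl, hμ, hdem, hne⟩ := he
    exact ⟨(q, g) :: E, hμ, hdem, hne, hE⟩

lemma chain_split {v : Fin n → Fin m → ℝ} {p : Fin m → ℝ} {μ : Fin n → Option (Fin m)}
    {b : Option (Fin m)} {e : Fin n × Fin m} {Q : List (Fin n × Fin m)} :
    ∀ (P : List (Fin n × Fin m)) (a : Option (Fin m)),
      SChain v p μ a b (P ++ e :: Q) → SChain v p μ (some e.2) b Q := by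
  intro P
  induction P with
  | nil => intro a h; exact h.2.2.2
  | cons e' P ih => intro a h; exact ih _ h.2.2.2



lemma srepr {v : Fin n → Fin m → ℝ} {p : Fin m → ℝ} {μ : Fin n → Option (Fin m)}
    (hdem : ∀ q, μ q ∈ DemU (v q) p) (g0 : Fin m) :
    ∀ (N : ℕ) (E : List (Fin n × Fin m)), E.length ≤ N → ∀ (a b : Option (Fin m)),
      SChain v p μ a b E →
      ∃ (B : Finset (Fin n)) (t : Fin n → Fin m),
        (∀ r ∈ B, some (t r) ∈ DemU (v r) p ∧ μ r ≠ some (t r)) ∧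
        (Set.InjOn t B) ∧
        (∀ r ∈ B, μ r ≠ b) ∧
        (∑ r ∈ B, (v r (t r) - vO (v r) (μ r)) = pO p b - pO p a) ∧
        (∀ r ∈ B, μ r = a ∨ ∃ r' ∈ B, μ r = some (t r')) ∧
        (∀ r ∈ B, some (t r) ≠ a) ∧
        (b = a ∨ ∃ r ∈ B, b = some (t r)) ∧
        (∀ r ∈ B, some (t r) ∈ E.map (fun e => some e.2)) := by
  intro N
  induction N with
  | zero =>
    intro E hE a b hc
    have hEnil : E = [] := List.eq_nil_of_length_eq_zero (Nat.le_zero.mp hE)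
    subst hEnil
    have hab : a = b := hc
    exact ⟨∅, fun _ => g0, by simp, by simp [Set.InjOn], by simp, by simp [hab],
      by simp, by simp, Or.inl hab.symm, by simp⟩
  | succ N ih =>
    intro E hE a b hc
    match E with
    | [] =>
      have hab : a = b := hc
      exact ⟨∅, fun _ => g0, by simp, by simp [Set.InjOn], by simp, by simp [hab],
        by simp, by simp, Or.inl hab.symm, by simp⟩
    | e :: E₁ =>
      obtain ⟨hμe, hdeme, hnea, hc₁⟩ := hc
      by_cases ha : a ∈ (e :: E₁).map (fun e => some e.2)
      · -- cut: a occurs as a target, restart the chain there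
        obtain ⟨e', he', he'a⟩ : ∃ e' ∈ e :: E₁, some e'.2 = a := List.mem_map.mp ha
        obtain ⟨P, Q, hPQ⟩ := List.append_of_mem he'
        have hcQ : SChain v p μ a b Q := by
          have := chain_split (v := v) (p := p) (μ := μ) P a
            (by rw [← hPQ]; exact ⟨hμe, hdeme, hnea, hc₁⟩)
          rwa [he'a] at this
        have hlen : Q.length ≤ N := by
          have := congrArg List.length hPQ
          simp at this hE; omega
        obtain ⟨B, t, h1, h2, h3, h4, h5, h6, h7, h8⟩ := ih Q hlen a b hcQ
        refine ⟨B, t, h1, h2, h3, h4, h5, h6, h7, ?_⟩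
        intro r hr
        have hmem := h8 r hr
        rw [hPQ]
        simp only [List.map_append, List.map_cons, List.mem_append, List.mem_cons]
        right; right
        simpa using hmem
      · -- cons: a is fresh
        have hlen₁ : E₁.length ≤ N := by simp at hE; omega
        obtain ⟨B₁, t₁, h1, h2, h3, h4, h5, h6, h7, h8⟩ := ih E₁ hlen₁ (some e.2) b hc₁
        have haE₁ : ∀ r ∈ B₁, some (t₁ r) ≠ a := by
          intro r hr hcon
          apply ha
          simp only [List.map_cons, List.mem_cons]
          right
          rw [← hcon]
          exact h8 r hr
        have hrnotB : e.1 ∉ B₁ := by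
          intro hmem
          rcases h5 e.1 hmem with h | ⟨r', hr', h⟩
          · rw [hμe] at h; exact hnea h
          · rw [hμe] at h; exact haE₁ r' hr' h.symm
        refine ⟨insert e.1 B₁, Function.update t₁ e.1 e.2, ?_, ?_, ?_, ?_, ?_, ?_, ?_, ?_⟩
        · intro r hr
          rcases Finset.mem_insert.mp hr with rfl | hr
          · rw [Function.update_self, hμe]; exact ⟨hdeme, hnea⟩
          · rw [Function.update_of_ne (ne_of_mem_of_not_mem hr hrnotB)]
            exact h1 r hr
        · intro x hx y hy hxy
          simp only [Finset.coe_insert, Set.mem_insert_iff, Finset.mem_coe] at hx hy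
          rcases hx with rfl | hx <;> rcases hy with rfl | hy
          · rfl
          · exfalso
            rw [Function.update_self, Function.update_of_ne (ne_of_mem_of_not_mem hy hrnotB)] at hxy
            exact h6 y hy (by rw [← hxy])
          · exfalso
            rw [Function.update_self, Function.update_of_ne (ne_of_mem_of_not_mem hx hrnotB)] at hxy
            exact h6 x hx (by rw [hxy])
          · rw [Function.update_of_ne (ne_of_mem_of_not_mem hx hrnotB),
              Function.update_of_ne (ne_of_mem_of_not_mem hy hrnotB)] at hxy
            exact h2 hx hy hxy
        · intro r hr
          rcases Finset.mem_insert.mp hr with rfl | hr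
          · rw [hμe]
            rcases h7 with rfl | ⟨r', hr', rfl⟩
            · exact hnea
            · exact fun h => haE₁ r' hr' h.symm
          · exact h3 r hr
        · rw [Finset.sum_insert hrnotB, Function.update_self]
          have hsum' : ∑ r ∈ B₁, (v r (Function.update t₁ e.1 e.2 r) - vO (v r) (μ r))
              = ∑ r ∈ B₁, (v r (t₁ r) - vO (v r) (μ r)) := by
            apply Finset.sum_congr rfl
            intro r hr
            rw [Function.update_of_ne (ne_of_mem_of_not_mem hr hrnotB)]
          rw [hsum', h4]
          have hequ := util_eq_of_mem hdeme (hdem e.1)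
          rw [utilU_eq, utilU_eq, hμe] at hequ
          have : vO (v e.1) (some e.2) = v e.1 e.2 := rfl
          have hpe : pO p (some e.2) = p e.2 := rfl
          rw [this, hpe] at hequ
          rw [hμe, hpe]
          linarith
        · intro r hr
          rcases Finset.mem_insert.mp hr with rfl | hr
          · exact Or.inl hμe
          · rcases h5 r hr with h | ⟨r', hr', h⟩
            · right
              exact ⟨e.1, Finset.mem_insert_self _ _, by rw [Function.update_self]; exact h⟩
            · right
              refine ⟨r', Finset.mem_insert_of_mem hr', ?_⟩
              rw [Function.update_of_ne (ne_of_mem_of_not_mem hr' hrnotB)]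
              exact h
        · intro r hr
          rcases Finset.mem_insert.mp hr with rfl | hr
          · rw [Function.update_self]; exact fun h => hnea h.symm
          · rw [Function.update_of_ne (ne_of_mem_of_not_mem hr hrnotB)]
            exact haE₁ r hr
        · rcases h7 with rfl | ⟨r', hr', h⟩
          · exact Or.inr ⟨e.1, Finset.mem_insert_self _ _, by rw [Function.update_self]⟩
          · refine Or.inr ⟨r', Finset.mem_insert_of_mem hr', ?_⟩
            rw [Function.update_of_ne (ne_of_mem_of_not_mem hr' hrnotB)]
            exact h
        · intro r hr
          rcases Finset.mem_insert.mp hr with rfl | hr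
          · rw [Function.update_self]; simp
          · rw [Function.update_of_ne (ne_of_mem_of_not_mem hr hrnotB)]
            simp only [List.map_cons, List.mem_cons]
            right; exact h8 r hr

lemma anchor {s : Fin m → ℕ} {v : Fin n → Fin m → ℝ} {p : Fin m → ℝ}
    {μ : Fin n → Option (Fin m)} (hWE : IsWEU s v p μ)
    (hmin : IsMinimalWEPriceU s v p) (b : Fin m) :
    ∃ o₀, pO p o₀ = 0 ∧ Relation.ReflTransGen (SwapEdgeU v p μ) o₀ (some b) := by
  by_contra hno
  push_neg at hno
  set R := Relation.ReflTransGen (SwapEdgeU v p μ) with hR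
  set Sg : Finset (Fin m) := Finset.univ.filter (fun c => R (some c) (some b)) with hSg
  have hmemSg : ∀ c, c ∈ Sg ↔ R (some c) (some b) := by
    intro c; simp [hSg]
  have hb : b ∈ Sg := (hmemSg b).mpr Relation.ReflTransGen.refl
  have hSgne : Sg.Nonempty := ⟨b, hb⟩
  have hnone : ¬ R none (some b) := hno none rfl
  have hpos : ∀ c ∈ Sg, 0 < p c := by
    intro c hc
    rcases lt_or_eq_of_le (hmin.1 c) with h | h
    · exact h
    · exact absurd ((hmemSg c).mp hc) (hno (some c) h.symm)
  set ε1 : ℝ := Sg.inf' hSgne p with hε1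
  have hε1pos : 0 < ε1 := by
    rw [hε1, Finset.lt_inf'_iff]
    exact hpos
  set G : Finset (Fin n × Fin m) := Finset.univ.filter
    (fun x => x.2 ∈ Sg ∧ utilU (v x.1) p (some x.2) < utilU (v x.1) p (μ x.1)) with hG
  set gap : Fin n × Fin m → ℝ :=
    fun x => utilU (v x.1) p (μ x.1) - utilU (v x.1) p (some x.2) with hgap
  set ε : ℝ := if hGne : G.Nonempty then min ε1 (G.inf' hGne gap) else ε1 with hε
  have hεpos : 0 < ε := by
    rw [hε]
    split
    · next hGne =>
      apply lt_min hε1pos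
      rw [Finset.lt_inf'_iff]
      intro x hx
      have := (Finset.mem_filter.mp hx).2.2
      simp only [hgap]
      linarith
    · exact hε1pos
  have hεle1 : ε ≤ ε1 := by
    rw [hε]; split
    · exact min_le_left _ _
    · exact le_refl ε1
  have hεlep : ∀ c ∈ Sg, ε ≤ p c := fun c hc =>
    le_trans hεle1 (Finset.inf'_le _ hc)
  have hεgap : ∀ x ∈ G, ε ≤ gap x := by
    intro x hx
    rw [hε]
    split
    · next hGne => exact le_trans (min_le_right _ _) (Finset.inf'_le _ hx)
    · next hGne => exact absurd ⟨x, hx⟩ hGne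
  set p' : Fin m → ℝ := fun c => if c ∈ Sg then p c - ε else p c with hp'
  have h0' : ∀ c, 0 ≤ p' c := by
    intro c
    simp only [hp']
    split
    · next hc => have := hεlep c hc; linarith
    · exact hmin.1 c
  -- utilities under p'
  have hutil_other : ∀ (q : Fin n) (o : Option (Fin m)),
      (∀ c, o = some c → c ∉ Sg) → utilU (v q) p' o = utilU (v q) p o := by
    intro q o ho
    cases o with
    | none => rfl
    | some c => simp only [utilU, hp']; rw [if_neg (ho c rfl)]
  have hutil_in : ∀ (q : Fin n) (c : Fin m), c ∈ Sg →
      utilU (v q) p' (some c) = utilU (v q) p (some c) + ε := by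
    intro q c hc
    simp only [utilU, hp']
    rw [if_pos hc]
    ring
  have hWE' : IsWEU s v p' μ := by
    refine ⟨hWE.1, ?_, ?_⟩
    · intro q
      intro o'
      by_cases hqS : R (μ q) (some b)
      · -- μ q is a good in Sg
        obtain ⟨cμ, hcμ⟩ : ∃ cμ, μ q = some cμ := by
          cases hμq : μ q with
          | none => rw [hμq] at hqS; exact absurd hqS hnone
          | some cμ => exact ⟨cμ, rfl⟩
        have hcμS : cμ ∈ Sg := (hmemSg cμ).mpr (hcμ ▸ hqS)
        rw [hcμ, hutil_in q cμ hcμS]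
        have hb1 : utilU (v q) p o' ≤ utilU (v q) p (some cμ) := hcμ ▸ hWE.2.1 q o'
        cases o' with
        | none =>
          have : utilU (v q) p' none = utilU (v q) p none := rfl
          rw [this]
          linarith
        | some c =>
          by_cases hcS : c ∈ Sg
          · rw [hutil_in q c hcS]; linarith
          · rw [hutil_other q (some c) (by rintro c' ⟨rfl⟩; exact hcS)]
            linarith
      · -- μ q not in S
        have hμ' : utilU (v q) p' (μ q) = utilU (v q) p (μ q) := by
          apply hutil_other
          intro c hc hcS
          apply hqS
          rw [hc]
          exact (hmemSg c).mp hcS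
        rw [hμ']
        cases o' with
        | none => exact hWE.2.1 q none
        | some c =>
          by_cases hcS : c ∈ Sg
          · -- must be a strict gap
            have hle : utilU (v q) p (some c) ≤ utilU (v q) p (μ q) := hWE.2.1 q (some c)
            have hlt : utilU (v q) p (some c) < utilU (v q) p (μ q) := by
              rcases lt_or_eq_of_le hle with h | h
              · exact h
              · exfalso
                have hdemc : some c ∈ DemU (v q) p := by
                  intro o''
                  calc utilU (v q) p o'' ≤ utilU (v q) p (μ q) := hWE.2.1 q o''
                    _ = utilU (v q) p (some c) := h.symm
                have hne : μ q ≠ some c := by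
                  rintro hcon
                  exact hqS (hcon ▸ (hmemSg c).mp hcS)
                have hedge : SwapEdgeU v p μ (μ q) (some c) := ⟨q, c, rfl, rfl, hdemc, hne⟩
                exact hqS (Relation.ReflTransGen.head hedge ((hmemSg c).mp hcS))
            have hxG : (q, c) ∈ G := by
              rw [hG, Finset.mem_filter]
              exact ⟨Finset.mem_univ _, hcS, hlt⟩
            have := hεgap (q, c) hxG
            rw [hutil_in q c hcS]
            simp only [hgap] at this
            linarith
          · rw [hutil_other q (some c) (by rintro c' ⟨rfl⟩; exact hcS)]
            exact hWE.2.1 q (some c)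
    · intro c hc
      have hpc : p c = 0 := hWE.2.2 c hc
      have hcS : c ∉ Sg := fun h => absurd hpc (ne_of_gt (hpos c h))
      simp only [hp']
      rw [if_neg hcS]
      exact hpc
  have := hmin.2.2 p' h0' ⟨μ, hWE'⟩ b
  have hpb' : p' b = p b - ε := by simp only [hp']; rw [if_pos hb]
  rw [hpb'] at this
  linarith

lemma sum_pair (v : Fin n → Fin m → ℝ) (μ : Fin n → Option (Fin m))
    (B : Finset (Fin n)) (t : Fin n → Fin m) :
    ∑ r : Fin n, ∑ h : Fin m,
      (((if r ∈ B ∧ h = t r then (1:ℝ) else 0) -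
        (if r ∈ B ∧ μ r = some h then 1 else 0)) * v r h)
      = ∑ r ∈ B, (v r (t r) - vO (v r) (μ r)) := by
  have inner : ∀ r : Fin n, ∑ h : Fin m,
      (((if r ∈ B ∧ h = t r then (1:ℝ) else 0) -
        (if r ∈ B ∧ μ r = some h then 1 else 0)) * v r h)
      = if r ∈ B then v r (t r) - vO (v r) (μ r) else 0 := by
    intro r
    by_cases hr : r ∈ B
    · simp only [hr, true_and, if_pos]
      rw [Finset.sum_congr rfl (fun h _ => sub_mul _ _ _), Finset.sum_sub_distrib]
      have e1 : ∑ h : Fin m, (if h = t r then (1:ℝ) else 0) * v r h = v r (t r) := by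
        simp [ite_mul]
      have e2 : ∑ h : Fin m, (if μ r = some h then (1:ℝ) else 0) * v r h
          = vO (v r) (μ r) := by
        cases hmr : μ r with
        | none => simp [vO]
        | some c => simp [vO, Option.some_inj, ite_mul]
      rw [e1, e2]
    · simp [hr]
  rw [Finset.sum_congr rfl (fun r _ => inner r), Finset.sum_ite_mem]
  congr 1
  simp


/-- under generic unit-demand valuations, at a minimal Walrasian
equilibrium price vector the over-demand of every good is at most 1, i.e. at most
`s g + 1` buyers have `g` in their demand correspondence. -/
theorem stmt6 (n m : ℕ) (s : Fin m → ℕ) (hs : ∀ g, 1 ≤ s g)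
    (v : Fin n → Fin m → ℝ) (hv : ∀ q g, 0 ≤ v q g) (hgen : GenericU v)
    (p : Fin m → ℝ) (hmin : IsMinimalWEPriceU s v p) :
    ∀ g : Fin m, Nat.card {q : Fin n // some g ∈ DemU (v q) p} ≤ s g + 1 := by
  intro g
  by_contra hcard
  push_neg at hcard
  obtain ⟨μ, hWE⟩ := hmin.2.1
  have hDcard : Nat.card {q : Fin n // some g ∈ DemU (v q) p}
      = (Finset.univ.filter (fun q => some g ∈ DemU (v q) p)).card := by
    rw [Nat.card_eq_fintype_card, Fintype.card_subtype]
  set D := Finset.univ.filter (fun q => some g ∈ DemU (v q) p) with hD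
  set A := Finset.univ.filter (fun q : Fin n => μ q = some g) with hA
  have hAD : A ⊆ D := by
    intro q hq
    rw [hA, Finset.mem_filter] at hq
    rw [hD, Finset.mem_filter]
    exact ⟨Finset.mem_univ _, hq.2 ▸ hWE.2.1 q⟩
  have hAcard : A.card ≤ s g := hWE.1 g
  have h2 : 1 < (D \ A).card := by
    rw [Finset.card_sdiff_of_subset hAD]
    rw [hDcard] at hcard
    omega
  obtain ⟨q1, hq1, q2, hq2, hq12⟩ := Finset.one_lt_card.mp h2
  rw [Finset.mem_sdiff, hD, hA, Finset.mem_filter, Finset.mem_filter] at hq1 hq2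
  have hq1dem : some g ∈ DemU (v q1) p := hq1.1.2
  have hq2dem : some g ∈ DemU (v q2) p := hq2.1.2
  have hq1μ : μ q1 ≠ some g := fun h => hq1.2 ⟨Finset.mem_univ _, h⟩
  have hq2μ : μ q2 ≠ some g := fun h => hq2.2 ⟨Finset.mem_univ _, h⟩
  -- anchored path to g
  obtain ⟨o₀, ho₀, hrtg⟩ := anchor hWE hmin g
  obtain ⟨E, hE⟩ := chain_of_rtg hrtg
  obtain ⟨B, t, hB1, hB2, -, hB4, -, -, -, -⟩ :=
    srepr hWE.2.1 g E.length E le_rfl o₀ (some g) hE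
  have hBsum : ∑ r ∈ B, (v r (t r) - vO (v r) (μ r)) = p g := by
    rw [hB4, ho₀]; simp [pO]
  -- choose the extra demander q
  have hqchoice : ∃ q, (some g ∈ DemU (v q) p) ∧ μ q ≠ some g ∧ ¬(q ∈ B ∧ t q = g) := by
    by_cases hc1 : q1 ∈ B ∧ t q1 = g
    · refine ⟨q2, hq2dem, hq2μ, fun hc2 => hq12 ?_⟩
      exact hB2 hc1.1 hc2.1 (hc1.2.trans hc2.2.symm)
    · exact ⟨q1, hq1dem, hq1μ, hc1⟩
  obtain ⟨q, hdemq, hμq, hnotB⟩ := hqchoice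
  -- anchored path to μ q
  have hπ' : ∃ (B' : Finset (Fin n)) (t' : Fin n → Fin m),
      (∀ r ∈ B', some (t' r) ∈ DemU (v r) p ∧ μ r ≠ some (t' r)) ∧
      (∀ r ∈ B', μ r ≠ μ q) ∧
      (∑ r ∈ B', (v r (t' r) - vO (v r) (μ r)) = pO p (μ q)) := by
    cases hμcase : μ q with
    | none => exact ⟨∅, fun _ => g, by simp, by simp, by simp [pO]⟩
    | some aq =>
      obtain ⟨o₁, ho₁, hrtg'⟩ := anchor hWE hmin aq
      obtain ⟨E', hE'⟩ := chain_of_rtg hrtg'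
      obtain ⟨B', t', h1', -, h3', h4', -, -, -, -⟩ :=
        srepr hWE.2.1 g E'.length E' le_rfl o₁ (some aq) hE'
      refine ⟨B', t', h1', fun r hr => hμcase ▸ h3' r hr, ?_⟩
      rw [h4', ho₁]
      simp [pO]
  obtain ⟨B', t', h1', h3', hsum'⟩ := hπ'
  have hqB' : q ∉ B' := fun h => h3' q h rfl
  -- the genericity certificate
  set α : Fin n → Fin m → ℤ := fun r h =>
    ((if r ∈ B ∧ h = t r then 1 else 0) - (if r ∈ B ∧ μ r = some h then 1 else 0))
    - ((if r ∈ B' ∧ h = t' r then 1 else 0) - (if r ∈ B' ∧ μ r = some h then 1 else 0))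
    - ((if r = q ∧ h = g then 1 else 0) - (if r = q ∧ μ r = some h then 1 else 0)) with hα
  have hK1 : ∀ r h, ¬(r ∈ B ∧ h = t r ∧ μ r = some h) := by
    rintro r h ⟨hm, hT, he⟩
    exact (hB1 r hm).2 (by rw [he, hT])
  have hK2 : ∀ r h, ¬(r ∈ B' ∧ h = t' r ∧ μ r = some h) := by
    rintro r h ⟨hm, hT, he⟩
    exact (h1' r hm).2 (by rw [he, hT])
  have hK3 : ∀ (r : Fin n) (h : Fin m), ¬(r = q ∧ h = g ∧ μ r = some h) := by
    rintro r h ⟨rfl, hT, he⟩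
    exact hμq (by rw [he, hT])
  have hK4 : ∀ r : Fin n, ¬(r ∈ B' ∧ r = q) := by
    rintro r ⟨hm, rfl⟩
    exact hqB' hm
  have hrange : ∀ r h, α r h = -1 ∨ α r h = 0 ∨ α r h = 1 := by
    intro r h
    simp only [hα]
    by_cases e : μ r = some h
    · rw [if_neg (fun hh : r ∈ B ∧ h = t r => hK1 r h ⟨hh.1, hh.2, e⟩),
        if_neg (fun hh : r ∈ B' ∧ h = t' r => hK2 r h ⟨hh.1, hh.2, e⟩),
        if_neg (fun hh : r = q ∧ h = g => hK3 r h ⟨hh.1, hh.2, e⟩)]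
      by_cases C1 : r ∈ B ∧ μ r = some h <;> by_cases C2 : r ∈ B' ∧ μ r = some h <;>
        by_cases C3 : r = q ∧ μ r = some h
      all_goals first
        | exact (hK4 r ⟨C2.1, C3.1⟩).elim
        | ((first | rw [if_pos C1] | rw [if_neg C1]) <;>
           (first | rw [if_pos C2] | rw [if_neg C2]) <;>
           (first | rw [if_pos C3] | rw [if_neg C3]) <;> norm_num)
    · rw [if_neg (fun hh : r ∈ B ∧ μ r = some h => e hh.2),
        if_neg (fun hh : r ∈ B' ∧ μ r = some h => e hh.2),
        if_neg (fun hh : r = q ∧ μ r = some h => e hh.2)]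
      by_cases P1 : r ∈ B ∧ h = t r <;> by_cases P2 : r ∈ B' ∧ h = t' r <;>
        by_cases P3 : r = q ∧ h = g
      all_goals first
        | exact (hK4 r ⟨P2.1, P3.1⟩).elim
        | ((first | rw [if_pos P1] | rw [if_neg P1]) <;>
           (first | rw [if_pos P2] | rw [if_neg P2]) <;>
           (first | rw [if_pos P3] | rw [if_neg P3]) <;> norm_num)
  -- the sum vanishes
  have hcast : ∀ (r : Fin n) (h : Fin m), ((α r h : ℤ) : ℝ)
      = (((if r ∈ B ∧ h = t r then (1:ℝ) else 0) - (if r ∈ B ∧ μ r = some h then 1 else 0))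
      - ((if r ∈ B' ∧ h = t' r then (1:ℝ) else 0) - (if r ∈ B' ∧ μ r = some h then 1 else 0)))
      - ((if r ∈ ({q} : Finset (Fin n)) ∧ h = g then (1:ℝ) else 0)
          - (if r ∈ ({q} : Finset (Fin n)) ∧ μ r = some h then 1 else 0)) := by
    intro r h
    simp only [hα, Finset.mem_singleton]
    split_ifs <;> norm_num
  have hsingle : ∑ r ∈ ({q} : Finset (Fin n)), (v r ((fun _ => g) r) - vO (v r) (μ r))
      = v q g - vO (v q) (μ q) := by
    rw [Finset.sum_singleton]
  have hsum0 : (∑ r : Fin n, ∑ h : Fin m, ((α r h : ℤ) : ℝ) * v r h) = 0 := by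
    have hrw : ∀ (r : Fin n) (h : Fin m), ((α r h : ℤ) : ℝ) * v r h
        = (((if r ∈ B ∧ h = t r then (1:ℝ) else 0)
            - (if r ∈ B ∧ μ r = some h then 1 else 0)) * v r h)
        - (((if r ∈ B' ∧ h = t' r then (1:ℝ) else 0)
            - (if r ∈ B' ∧ μ r = some h then 1 else 0)) * v r h)
        - (((if r ∈ ({q} : Finset (Fin n)) ∧ h = (fun _ => g) r then (1:ℝ) else 0)
            - (if r ∈ ({q} : Finset (Fin n)) ∧ μ r = some h then 1 else 0)) * v r h) := by
      intro r h
      rw [hcast]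
      ring
    calc ∑ r : Fin n, ∑ h : Fin m, ((α r h : ℤ) : ℝ) * v r h
        = (∑ r : Fin n, ∑ h : Fin m,
            (((if r ∈ B ∧ h = t r then (1:ℝ) else 0)
              - (if r ∈ B ∧ μ r = some h then 1 else 0)) * v r h))
          - (∑ r : Fin n, ∑ h : Fin m,
            (((if r ∈ B' ∧ h = t' r then (1:ℝ) else 0)
              - (if r ∈ B' ∧ μ r = some h then 1 else 0)) * v r h))
          - (∑ r : Fin n, ∑ h : Fin m,
            (((if r ∈ ({q} : Finset (Fin n)) ∧ h = (fun _ => g) r then (1:ℝ) else 0)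
              - (if r ∈ ({q} : Finset (Fin n)) ∧ μ r = some h then 1 else 0)) * v r h)) := by
          rw [← Finset.sum_sub_distrib, ← Finset.sum_sub_distrib]
          apply Finset.sum_congr rfl
          intro r _
          rw [← Finset.sum_sub_distrib, ← Finset.sum_sub_distrib]
          exact Finset.sum_congr rfl (fun h _ => hrw r h)
      _ = (∑ r ∈ B, (v r (t r) - vO (v r) (μ r)))
          - (∑ r ∈ B', (v r (t' r) - vO (v r) (μ r)))
          - (∑ r ∈ ({q} : Finset (Fin n)), (v r ((fun _ => g) r) - vO (v r) (μ r))) := by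
          rw [sum_pair v μ B t, sum_pair v μ B' t', sum_pair v μ {q} (fun _ => g)]
      _ = 0 := by
          rw [hBsum, hsum', hsingle]
          have hequ := util_eq_of_mem hdemq (hWE.2.1 q)
          rw [utilU_eq, utilU_eq] at hequ
          have hvg : vO (v q) (some g) = v q g := rfl
          have hpg : pO p (some g) = p g := rfl
          rw [hvg, hpg] at hequ
          linarith
  have hzero := hgen α hrange hsum0 q g
  have hn1 : ¬(q ∈ B ∧ g = t q) := fun hh => hnotB ⟨hh.1, hh.2.symm⟩
  have hval : α q g = -1 := by
    simp only [hα]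
    rw [if_neg hn1, if_neg (fun hh : q ∈ B ∧ μ q = some g => hμq hh.2),
      if_neg (fun hh : q ∈ B' ∧ g = t' q => hqB' hh.1),
      if_neg (fun hh : q ∈ B' ∧ μ q = some g => hqB' hh.1)]
    simp [hμq]
  rw [hzero] at hval
  exact absurd hval (by norm_num)

end Aux

end
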